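/- Let f : [a,b] → ℝ be continuous and F(x) := ∫_a^x f(y) dy. Then for x ∈ (a,b) one has F(x) = F**(x) if and only if ∫_x^y (f(s) − f(x)) ds ≥ 0 for all y ∈ [a,b]; equivalently, the contact set K_F := {x ∈ (a,b) : F(x) = F**(x)} equals {x ∈ (a,b) : F(y) − F(x) − (y−x)F'(x) ≥ 0 for all y ∈ [a,b]}. -/

import Mathlib

/-! `F(x)` is itself one of the chord values in the infimum defining `F**(x)` (take `λ = 0`),
so `F(x) = F**(x)` says exactly that `F(x)` lies below every chord of `F` over `[a,b]` passing
over `x`. For `t < x < y` this is the three-slope inequality `slope F t x ≤ slope F x y`; letting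
the endpoint on one side tend to `x` compares `F'(x) = f(x)` with the slope to the other side,
which is the tangent-line inequality `F(y) ≥ F(x) + (y - x) f(x)`. Conversely, a supporting line
at `x` lies below every chord over `x`. The integral form is the same inequality, since
`∫_x^y (f s - f x) ds = F(y) - F(x) - (y - x) f(x)`. -/

open Set MeasureTheory Filter Topology

/-- The convex envelope (convexification) of `f` on `[a,b]`. -/
noncomputable def convEnv (a b : ℝ) (f : ℝ → ℝ) : ℝ → ℝ := fun x =>
  sInf {y : ℝ | ∃ lam x₀ x₁ : ℝ, lam ∈ Set.Icc (0:ℝ) 1 ∧ x₀ ∈ Set.Icc a b ∧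
    x₁ ∈ Set.Icc a b ∧ (1 - lam) * x₀ + lam * x₁ = x ∧
    y = (1 - lam) * f x₀ + lam * f x₁}

/-- The primitive `F(x) = ∫_a^x f(y) dy`. -/
noncomputable def primit (a : ℝ) (f : ℝ → ℝ) : ℝ → ℝ := fun x => ∫ y in a..x, f y

def BelowChords (s : Set ℝ) (G : ℝ → ℝ) (x : ℝ) : Prop :=
  ∀ lam x₀ x₁ : ℝ, lam ∈ Icc (0 : ℝ) 1 → x₀ ∈ s → x₁ ∈ s → (1 - lam) * x₀ + lam * x₁ = x →
    G x ≤ (1 - lam) * G x₀ + lam * G x₁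

theorem eq_convEnv_iff_belowChords {a b x : ℝ} {G : ℝ → ℝ} (hG : BddBelow (G '' Icc a b))
    (hx : x ∈ Icc a b) : G x = convEnv a b G x ↔ BelowChords (Icc a b) G x := by
  set S := {y : ℝ | ∃ lam x₀ x₁ : ℝ, lam ∈ Icc (0 : ℝ) 1 ∧ x₀ ∈ Icc a b ∧
    x₁ ∈ Icc a b ∧ (1 - lam) * x₀ + lam * x₁ = x ∧ y = (1 - lam) * G x₀ + lam * G x₁}
  have hconv : convEnv a b G x = sInf S := rfl
  have hself : G x ∈ S := ⟨0, x, x, left_mem_Icc.2 zero_le_one, hx, hx, by ring, by ring⟩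
  have hbdd : BddBelow S := by
    obtain ⟨m, hm⟩ := hG
    refine ⟨m, ?_⟩
    rintro _ ⟨lam, x₀, x₁, ⟨hlam₀, hlam₁⟩, h₀, h₁, -, rfl⟩
    nlinarith [hm (mem_image_of_mem G h₀), hm (mem_image_of_mem G h₁)]
  rw [hconv]
  constructor
  · intro h lam x₀ x₁ hlam h₀ h₁ hc
    rw [h]
    exact csInf_le hbdd ⟨lam, x₀, x₁, hlam, h₀, h₁, hc, rfl⟩
  · intro h
    refine le_antisymm (le_csInf ⟨_, hself⟩ ?_) (csInf_le hbdd hself)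
    rintro _ ⟨lam, x₀, x₁, hlam, h₀, h₁, hc, rfl⟩
    exact h lam x₀ x₁ hlam h₀ h₁ hc

namespace BelowChords

variable {s : Set ℝ} {G : ℝ → ℝ} {x : ℝ}

theorem slope_le_slope (h : BelowChords s G x) {t y : ℝ} (ht : t ∈ s) (hy : y ∈ s)
    (htx : t < x) (hxy : x < y) : slope G t x ≤ slope G x y := by
  have hty : 0 < y - t := by linarith
  have hchord := h ((x - t) / (y - t)) t y
    ⟨div_nonneg (by linarith) hty.le, (div_le_one hty).2 (by linarith)⟩ ht hy
    (by field_simp; ring)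
  have hcross : (y - x) * (G x - G t) ≤ (x - t) * (G y - G x) := by
    field_simp at hchord
    linarith
  rw [slope_def_field, slope_def_field, div_le_div_iff₀ (by linarith) (by linarith)]
  linarith

theorem of_forall_le {c : ℝ} (h : ∀ y ∈ s, 0 ≤ G y - G x - (y - x) * c) :
    BelowChords s G x := by
  intro lam x₀ x₁ ⟨hlam₀, hlam₁⟩ h₀ h₁ hc
  have hc' : ((1 - lam) * x₀ + lam * x₁ - x) * c = 0 := by rw [hc, sub_self, zero_mul]
  nlinarith [mul_nonneg (sub_nonneg.2 hlam₁) (h x₀ h₀), mul_nonneg hlam₀ (h x₁ h₁)]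

theorem forall_le_of_hasDerivAt {c : ℝ} (h : BelowChords s G x) (hs : s ∈ 𝓝 x)
    (hG : HasDerivAt G c x) : ∀ y ∈ s, 0 ≤ G y - G x - (y - x) * c := by
  obtain ⟨hleft, hright⟩ := hasDerivAt_iff_tendsto_slope_left_right.1 hG
  intro y hy
  rcases lt_trichotomy y x with hyx | rfl | hxy
  · have hle : slope G y x ≤ c := ge_of_tendsto hright <| by
      filter_upwards [inter_mem_nhdsWithin (Ioi x) hs, self_mem_nhdsWithin] with t ht htx
      exact h.slope_le_slope hy ht.2 hyx htx
    rw [slope_def_field, div_le_iff₀ (sub_pos.2 hyx)] at hle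
    linarith
  · simp
  · have hle : c ≤ slope G x y := le_of_tendsto hleft <| by
      filter_upwards [inter_mem_nhdsWithin (Iio x) hs, self_mem_nhdsWithin] with t ht htx
      rw [slope_comm]
      exact h.slope_le_slope ht.2 hy htx hxy
    rw [slope_def_field, le_div_iff₀ (sub_pos.2 hxy)] at hle
    linarith

theorem iff_forall_le_of_hasDerivAt {c : ℝ} (hs : s ∈ 𝓝 x) (hG : HasDerivAt G c x) :
    BelowChords s G x ↔ ∀ y ∈ s, 0 ≤ G y - G x - (y - x) * c :=
  ⟨fun h => h.forall_le_of_hasDerivAt hs hG, of_forall_le⟩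

end BelowChords

section Primitive

variable {a b : ℝ} {f : ℝ → ℝ}

theorem continuousOn_primit (hab : a ≤ b) (hf : ContinuousOn f (Icc a b)) :
    ContinuousOn (primit a f) (Icc a b) := by
  have := intervalIntegral.continuousOn_primitive_interval (μ := volume)
    (hf.integrableOn_Icc.mono_set (uIcc_subset_Icc (left_mem_Icc.2 hab) (right_mem_Icc.2 hab)))
  rwa [uIcc_of_le hab] at this

theorem hasDerivAt_primit (hf : ContinuousOn f (Icc a b)) {x : ℝ} (hx : x ∈ Ioo a b) :
    HasDerivAt (primit a f) (f x) x :=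
  intervalIntegral.integral_hasDerivAt_right
    (hf.mono (uIcc_subset_Icc (left_mem_Icc.2 (hx.1.trans hx.2).le) (Ioo_subset_Icc_self hx))
      |>.intervalIntegrable)
    ((hf.mono Ioo_subset_Icc_self).stronglyMeasurableAtFilter isOpen_Ioo x hx)
    (hf.continuousAt (Icc_mem_nhds hx.1 hx.2))

theorem integral_sub_eq_primit_sub (hf : ContinuousOn f (Icc a b)) {x y : ℝ}
    (hx : x ∈ Icc a b) (hy : y ∈ Icc a b) :
    ∫ s in x..y, (f s - f x) = primit a f y - primit a f x - (y - x) * f x := by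
  have ha : a ∈ Icc a b := left_mem_Icc.2 (hx.1.trans hx.2)
  have hint : ∀ u ∈ Icc a b, ∀ v ∈ Icc a b, IntervalIntegrable f volume u v :=
    fun u hu v hv => (hf.mono (uIcc_subset_Icc hu hv)).intervalIntegrable
  rw [intervalIntegral.integral_sub (hint x hx y hy) intervalIntegrable_const,
    intervalIntegral.integral_const, smul_eq_mul, primit, primit,
    intervalIntegral.integral_interval_sub_left (hint a ha y hy) (hint a ha x hx)]

end Primitive

theorem contact_set_characterization_general (a b : ℝ) (f : ℝ → ℝ)
    (hf : ContinuousOn f (Set.Icc a b)) :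
    ∀ x ∈ Set.Ioo a b,
      (primit a f x = convEnv a b (primit a f) x ↔
        ∀ y ∈ Set.Icc a b, 0 ≤ ∫ s in x..y, (f s - f x)) ∧
      (primit a f x = convEnv a b (primit a f) x ↔
        ∀ y ∈ Set.Icc a b, 0 ≤ primit a f y - primit a f x - (y - x) * f x) := by
  intro x hx
  have hab : a ≤ b := (hx.1.trans hx.2).le
  have hcontact : primit a f x = convEnv a b (primit a f) x ↔
      ∀ y ∈ Icc a b, 0 ≤ primit a f y - primit a f x - (y - x) * f x := by
    rw [eq_convEnv_iff_belowChords (isCompact_Icc.bddBelow_image (continuousOn_primit hab hf))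
      (Ioo_subset_Icc_self hx)]
    exact BelowChords.iff_forall_le_of_hasDerivAt (Icc_mem_nhds hx.1 hx.2) (hasDerivAt_primit hf hx)
  refine ⟨hcontact.trans (forall₂_congr fun y hy => ?_), hcontact⟩
  rw [integral_sub_eq_primit_sub hf (Ioo_subset_Icc_self hx) hy]

/-- Characterization of the contact set `K_F = {x ∈ (a,b) : F(x) = F**(x)}`:
`x ∈ K_F` iff `∫_x^y (f(s) - f(x)) ds ≥ 0` for all `y ∈ [a,b]`, equivalently iff
`F(y) - F(x) - (y-x) F'(x) ≥ 0` for all `y ∈ [a,b]` (here `F' = f`). -/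
theorem contact_set_characterization (a b : ℝ) (hab : a < b) (f : ℝ → ℝ)
    (hf : ContinuousOn f (Set.Icc a b)) :
    ∀ x ∈ Set.Ioo a b,
      (primit a f x = convEnv a b (primit a f) x ↔
        ∀ y ∈ Set.Icc a b, 0 ≤ ∫ s in x..y, (f s - f x)) ∧
      (primit a f x = convEnv a b (primit a f) x ↔
        ∀ y ∈ Set.Icc a b, 0 ≤ primit a f y - primit a f x - (y - x) * f x) :=
  contact_set_characterization_general a b f hf
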